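/- arXiv:2005.01963 — 4 statements merged into one kernel-verified Lean document; each statement's English description precedes it below -/
import Mathlib

section
/- Let G be a finite group and H ≤ G a subgroup such that G acts faithfully on G/H. If the pair (G,H) is doubly homogeneous, then it is ℚ-trivial. -/
noncomputable section

open Polynomial

/-- `z` is a root of rational: some positive power of `z` is rational. -/
def IsRootOfRational (z : ℂ) : Prop := ∃ k : ℕ, 0 < k ∧ ∃ q : ℚ, z ^ k = (q : ℂ)

/-- `z` is a rational number (viewed in `ℂ`). -/
def IsRat (z : ℂ) : Prop := ∃ q : ℚ, z = (q : ℂ)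

/-- The Galois-like group `G_f`: permutations of the (indexed) roots preserving all
multiplicative relations. -/
def GaloisLike {ι : Type*} [Fintype ι] (r : ι → ℂ) : Set (Equiv.Perm ι) :=
  {σ | ∀ v : ι → ℤ, (∏ i, r i ^ v i) = 1 → (∏ i, r (σ i) ^ v i) = 1}

/-- The Galois-like group `G_f^B`. -/
def GaloisLikeB {ι : Type*} [Fintype ι] (r : ι → ℂ) : Set (Equiv.Perm ι) :=
  {σ | ∀ v : ι → ℤ, IsRat (∏ i, r i ^ v i) → (∏ i, r (σ i) ^ v i) = ∏ i, r i ^ v i}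

/-- The Galois-like group `G_f^ℚ`. -/
def GaloisLikeQ {ι : Type*} [Fintype ι] (r : ι → ℂ) : Set (Equiv.Perm ι) :=
  {σ | ∀ v : ι → ℤ, IsRat (∏ i, r i ^ v i) → IsRat (∏ i, r (σ i) ^ v i)}

/-- The exponent lattice of the vector `w` is trivial. -/
def VecLatticeTrivial {ι : Type*} [Fintype ι] (w : ι → ℂ) : Prop :=
  ∀ u : ι → ℤ, (∏ i, w i ^ u i) = 1 → ∀ i j : ι, u i = u j

/-- The lattice `R_w^ℚ` of the vector `w` is trivial. -/
def VecLatticeQTrivial {ι : Type*} [Fintype ι] (w : ι → ℂ) : Prop :=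
  ∀ u : ι → ℤ, IsRat (∏ i, w i ^ u i) → ∀ i j : ι, u i = u j

/-- A subset `M ⊆ ℚ[G/H]` is ℚ-admissible: there is `μ ∈ ℚ[G]` with stabilizer
(under left multiplication) exactly `H` such that `mμ = 0` for all `m ∈ M`
(here `Σ_{g∈G} m(ḡ) • gμ = |H| ⋅ (mμ)`, so we express `mμ = 0` this way). -/
def IsQAdmissible {G : Type*} [Group G] (H : Subgroup G) (M : Set ((G ⧸ H) →₀ ℚ)) : Prop :=
  ∃ μ : MonoidAlgebra ℚ G,
    (∀ g : G, MonoidAlgebra.single g (1 : ℚ) * μ = μ ↔ g ∈ H) ∧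
    ∀ m ∈ M, (∑ᶠ g : G, m (QuotientGroup.mk g) • (MonoidAlgebra.single g (1 : ℚ) * μ)) = 0

/-- A ℚ-subspace of `ℚ[G/H]` is a `ℚ[G]`-submodule iff it is stable under the
permutation action of `G` on `G/H`. -/
def IsGStable {G : Type*} [Group G] (H : Subgroup G) (M : Submodule ℚ ((G ⧸ H) →₀ ℚ)) : Prop :=
  ∀ g : G, ∀ m ∈ M, Finsupp.mapDomain (fun x : G ⧸ H => g • x) m ∈ M

/-- The pair `(G,H)` is ℚ-trivial: the only ℚ-admissible `ℚ[G]`-submodules of `ℚ[G/H]`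
are `0` and `V₁` (the line of constant coefficient vectors). -/
def QTrivialPair {G : Type*} [Group G] (H : Subgroup G) : Prop :=
  ∀ M : Submodule ℚ ((G ⧸ H) →₀ ℚ), IsGStable H M →
    IsQAdmissible H (M : Set ((G ⧸ H) →₀ ℚ)) →
    M = ⊥ ∨ (M : Set ((G ⧸ H) →₀ ℚ)) = {m | ∃ a : ℚ, ∀ x, m x = a}

/-- The action of `G` on `G/H` is transitive. -/
def PairTransitive {G : Type*} [Group G] (H : Subgroup G) : Prop :=
  ∀ x y : G ⧸ H, ∃ g : G, g • x = y

/-- The action of `G` on `G/H` is doubly transitive. -/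
def PairDoublyTransitive {G : Type*} [Group G] (H : Subgroup G) : Prop :=
  ∀ x₁ x₂ y₁ y₂ : G ⧸ H, x₁ ≠ x₂ → y₁ ≠ y₂ → ∃ g : G, g • x₁ = y₁ ∧ g • x₂ = y₂

/-- The action of `G` on `G/H` is doubly homogeneous. -/
def PairDoublyHomogeneous {G : Type*} [Group G] (H : Subgroup G) : Prop :=
  ∀ x₁ x₂ y₁ y₂ : G ⧸ H, x₁ ≠ x₂ → y₁ ≠ y₂ →
    ∃ g : G, ({g • x₁, g • x₂} : Set (G ⧸ H)) = {y₁, y₂}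

/-- A set of permutations of `ι` acts transitively. -/
def SetTransitive {ι : Type*} (S : Set (Equiv.Perm ι)) : Prop :=
  ∀ i j : ι, ∃ σ ∈ S, σ i = j

/-- A set of permutations of `ι` acts doubly transitively. -/
def SetDoublyTransitive {ι : Type*} (S : Set (Equiv.Perm ι)) : Prop :=
  ∀ i j k l : ι, i ≠ j → k ≠ l → ∃ σ ∈ S, σ i = k ∧ σ j = l

/-- A set of permutations of `ι` acts doubly homogeneously. -/
def SetDoublyHomogeneous {ι : Type*} (S : Set (Equiv.Perm ι)) : Prop :=
  ∀ i j k l : ι, i ≠ j → k ≠ l → ∃ σ ∈ S, ({σ i, σ j} : Set ι) = {k, l}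


/-!
A nonzero admissible `M` that is not the line of constants contains a non-constant `m`, say
`m x ≠ m y`. Averaging the translates of `m` against the coefficients `m (g⁻¹ x) - m (g⁻¹ y)`
gives `u z = B x z - B y z`, where `B p q = ∑_g m (g⁻¹ p) m (g⁻¹ q)` (`translateGram`) is a
`G`-invariant symmetric form. Double homogeneity makes `B` constant off the diagonal and
transitivity makes it constant on it, so `u` is a multiple of `e_x - e_y`, and a nonzero one
because `u x - u y = ∑_g (m (g⁻¹ x) - m (g⁻¹ y))²`. Hence `e_x - e_y ∈ M`. But
`(e_x - e_y) μ = 0` means `g_x μ = g_y μ` for coset representatives, i.e. `g_y⁻¹ g_x`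
stabilizes `μ`, so `x = y`.
-/

open Finset

lemma Finsupp.mapDomain_smul_apply {G X : Type*} [Group G] [MulAction G X] (g : G)
    (m : X →₀ ℚ) (z : X) : Finsupp.mapDomain (g • ·) m z = m (g⁻¹ • z) :=
  Finsupp.mapDomain_equiv_apply (f := MulAction.toPerm g) m z

lemma Submodule.eq_bot_or_coe_eq_constants {K X : Type*} [Field K] [Nonempty X]
    (M : Submodule K (X →₀ K)) (hM : ∀ m ∈ M, ∀ x y, m x = m y) :
    M = ⊥ ∨ (M : Set (X →₀ K)) = {m | ∃ a : K, ∀ x, m x = a} := by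
  rw [or_iff_not_imp_left]
  intro hne
  obtain ⟨m₀, hm₀, hm₀ne⟩ := Submodule.exists_mem_ne_zero_of_ne_bot hne
  obtain ⟨x₀⟩ := ‹Nonempty X›
  have hx₀ : m₀ x₀ ≠ 0 := fun h ↦ hm₀ne (Finsupp.ext fun x ↦ by rw [hM m₀ hm₀ x x₀, h]; rfl)
  ext m
  refine ⟨fun hm ↦ ⟨m x₀, fun x ↦ hM m hm x x₀⟩, fun ⟨a, ha⟩ ↦ ?_⟩
  have : m = (a / m₀ x₀) • m₀ := Finsupp.ext fun x ↦ by
    rw [Finsupp.smul_apply, smul_eq_mul, ha, hM m₀ hm₀ x x₀, div_mul_cancel₀ _ hx₀]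
  exact this ▸ M.smul_mem _ hm₀

section GramForm

variable (G : Type*) {X : Type*} [Group G] [Fintype G] [MulAction G X]

def translateGram (m : X → ℚ) (p q : X) : ℚ := ∑ g : G, m (g⁻¹ • p) * m (g⁻¹ • q)

variable {G}

lemma translateGram_comm (m : X → ℚ) (p q : X) :
    translateGram G m p q = translateGram G m q p := by
  simp only [translateGram, mul_comm]

lemma translateGram_smul (m : X → ℚ) (h : G) (p q : X) :
    translateGram G m (h • p) (h • q) = translateGram G m p q :=
  (Fintype.sum_equiv (Equiv.mulLeft h) _ _ fun g ↦ by
    simp only [Equiv.coe_mulLeft, mul_inv_rev, mul_smul, inv_smul_smul]).symm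

lemma translateGram_eq_of_ne
    (h2h : ∀ x₁ x₂ y₁ y₂ : X, x₁ ≠ x₂ → y₁ ≠ y₂ → ∃ g : G, ({g • x₁, g • x₂} : Set X) = {y₁, y₂})
    (m : X → ℚ) {p q r s : X} (hpq : p ≠ q) (hrs : r ≠ s) :
    translateGram G m p q = translateGram G m r s := by
  obtain ⟨g, hg⟩ := h2h p q r s hpq hrs
  rcases Set.pair_eq_pair_iff.mp hg with ⟨rfl, rfl⟩ | ⟨rfl, rfl⟩
  · rw [translateGram_smul]
  · rw [translateGram_smul, translateGram_comm]

lemma translateGram_self_eq [MulAction.IsPretransitive G X] (m : X → ℚ) (p q : X) :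
    translateGram G m p p = translateGram G m q q := by
  obtain ⟨g, rfl⟩ := MulAction.exists_smul_eq G p q
  rw [translateGram_smul]

lemma sum_sub_smul_mapDomain_apply (m : X →₀ ℚ) (x y z : X) :
    (∑ g : G, (m (g⁻¹ • x) - m (g⁻¹ • y)) • Finsupp.mapDomain (g • ·) m) z =
      translateGram G m x z - translateGram G m y z := by
  simp only [translateGram, Finsupp.finsetSum_apply, Finsupp.smul_apply,
    Finsupp.mapDomain_smul_apply, smul_eq_mul, ← sum_sub_distrib, sub_mul]

lemma translateGram_sub_pos [MulAction.IsPretransitive G X] {m : X → ℚ} {x y : X}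
    (hxy : m x ≠ m y) :
    0 < translateGram G m x x - translateGram G m x y := by
  have hsq : ∑ g : G, (m (g⁻¹ • x) - m (g⁻¹ • y)) ^ 2 =
      translateGram G m x x - 2 * translateGram G m x y + translateGram G m y y := by
    simp only [translateGram, mul_sum, ← sum_sub_distrib, ← sum_add_distrib]
    exact sum_congr rfl fun _ _ ↦ by ring
  have hpos : 0 < ∑ g : G, (m (g⁻¹ • x) - m (g⁻¹ • y)) ^ 2 :=
    sum_pos' (fun _ _ ↦ sq_nonneg _)
      ⟨1, mem_univ _, by simpa using sq_pos_of_ne_zero (sub_ne_zero.mpr hxy)⟩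
  linarith [translateGram_self_eq (G := G) m x y]

lemma single_sub_single_mem_of_apply_ne [MulAction.IsPretransitive G X]
    (h2h : ∀ x₁ x₂ y₁ y₂ : X, x₁ ≠ x₂ → y₁ ≠ y₂ → ∃ g : G, ({g • x₁, g • x₂} : Set X) = {y₁, y₂})
    {M : Submodule ℚ (X →₀ ℚ)} (hM : ∀ g : G, ∀ m ∈ M, Finsupp.mapDomain (g • ·) m ∈ M)
    {m : X →₀ ℚ} (hm : m ∈ M) {x y : X} (hxy : m x ≠ m y) :
    Finsupp.single x 1 - Finsupp.single y 1 ∈ M := by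
  have hne : x ≠ y := fun h ↦ hxy (h ▸ rfl)
  set c := translateGram G m x x - translateGram G m x y
  have hc : c ≠ 0 := (translateGram_sub_pos hxy).ne'
  have hsum : ∑ g : G, (m (g⁻¹ • x) - m (g⁻¹ • y)) • Finsupp.mapDomain (g • ·) m =
      c • (Finsupp.single x 1 - Finsupp.single y 1) := by
    ext z
    rw [sum_sub_smul_mapDomain_apply, Finsupp.smul_apply, Finsupp.sub_apply, smul_eq_mul]
    by_cases hzx : z = x
    · subst hzx
      simp [c, Finsupp.single_eq_of_ne hne, translateGram_comm m z y]
    by_cases hzy : z = y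
    · subst hzy
      simp [c, Finsupp.single_eq_of_ne hzx, translateGram_self_eq m z x]
    · rw [Finsupp.single_eq_of_ne hzx, Finsupp.single_eq_of_ne hzy,
        translateGram_eq_of_ne h2h m (Ne.symm hzx) (Ne.symm hzy)]
      simp
  have hmem : c • (Finsupp.single x 1 - Finsupp.single y 1) ∈ M :=
    hsum ▸ M.sum_mem fun g _ ↦ M.smul_mem _ (hM g m hm)
  simpa [hc] using M.smul_mem c⁻¹ hmem

end GramForm

lemma sum_single_mk_smul {G V : Type*} [Group G] [Fintype G] [AddCommGroup V] [Module ℚ V]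
    {H : Subgroup G} (f : G → V) (hf : ∀ g, ∀ h ∈ H, f (g * h) = f g) (a : G) :
    ∑ g : G, Finsupp.single (a : G ⧸ H) (1 : ℚ) g • f g = (Nat.card H : ℚ) • f a := by
  classical
  have hterm : ∀ k : G, Finsupp.single (a : G ⧸ H) (1 : ℚ) ↑(a * k) • f (a * k) =
      if k ∈ H then f a else 0 := fun k ↦ by
    by_cases hk : k ∈ H <;> simp [QuotientGroup.eq, hk, hf a k]
  rw [← Equiv.sum_comp (Equiv.mulLeft a)]
  simp only [Equiv.coe_mulLeft, hterm, sum_ite, sum_const, smul_zero, add_zero]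
  rw [← Nat.cast_smul_eq_nsmul ℚ, Nat.card_eq_fintype_card, Fintype.card_subtype]

lemma IsQAdmissible.eq_of_single_sub_single_mem {G : Type*} [Group G] [Fintype G]
    {H : Subgroup G} {M : Set ((G ⧸ H) →₀ ℚ)} (hadm : IsQAdmissible H M) {x y : G ⧸ H}
    (hxy : Finsupp.single x 1 - Finsupp.single y 1 ∈ M) : x = y := by
  obtain ⟨μ, hstab, hrel⟩ := hadm
  obtain ⟨a, rfl⟩ := QuotientGroup.mk_surjective x
  obtain ⟨b, rfl⟩ := QuotientGroup.mk_surjective y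
  have hsingle : ∀ g h : G, MonoidAlgebra.single g (1 : ℚ) * (MonoidAlgebra.single h 1 * μ) =
      MonoidAlgebra.single (g * h) 1 * μ := fun g h ↦ by
    rw [← mul_assoc, MonoidAlgebra.single_mul_single, mul_one]
  have hcoset : ∀ g, ∀ h ∈ H, MonoidAlgebra.single (g * h) (1 : ℚ) * μ =
      MonoidAlgebra.single g 1 * μ := fun g h hh ↦ by
    rw [← hsingle, (hstab h).mpr hh]
  have hab : MonoidAlgebra.single a (1 : ℚ) * μ = MonoidAlgebra.single b 1 * μ := by
    have h0 := hrel _ hxy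
    simp only [finsum_eq_sum_of_fintype, Finsupp.sub_apply, sub_smul, sum_sub_distrib,
      sum_single_mk_smul (fun g ↦ MonoidAlgebra.single g 1 * μ) hcoset, sub_eq_zero] at h0
    exact smul_right_injective _ (Nat.cast_ne_zero.mpr Nat.card_pos.ne') h0
  rw [QuotientGroup.eq, ← hstab, ← hsingle, ← hab, hsingle, inv_mul_cancel,
    ← MonoidAlgebra.one_def, one_mul]

theorem statement2_general {G : Type*} [Group G] [Finite G] (H : Subgroup G)
    (h2h : PairDoublyHomogeneous H) :
    QTrivialPair H := by
  have := Fintype.ofFinite G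
  intro M hM hadm
  by_cases hconst : ∀ m ∈ M, ∀ x y, m x = m y
  · exact M.eq_bot_or_coe_eq_constants hconst
  · push Not at hconst
    obtain ⟨m, hm, x, y, hxy⟩ := hconst
    have hxy_mem := single_sub_single_mem_of_apply_ne h2h hM hm hxy
    exact absurd (hadm.eq_of_single_sub_single_mem hxy_mem) fun h ↦ hxy (h ▸ rfl)

/-- Let `G` be a finite group and `H ≤ G` a subgroup such that `G` acts
faithfully on `G/H`. If the pair `(G,H)` is doubly homogeneous, then it is ℚ-trivial. -/
theorem statement2 {G : Type*} [Group G] [Finite G] (H : Subgroup G)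
    (hfaith : ∀ g : G, (∀ x : G ⧸ H, g • x = x) → g = 1)
    (h2h : PairDoublyHomogeneous H) :
    QTrivialPair H :=
  statement2_general H h2h

end
end

section
/- Suppose f ∈ ℚ[x] with f(0) ≠ 0 has no multiple roots, and let ⟨Ω⟩ = {∏_i r_i^{v(i)} : v ∈ ℤ^n} be the subgroup of ℂ* generated by the roots of f. Then the map sending σ ∈ G_f to the automorphism of ⟨Ω⟩ determined by ∏_i r_i^{v(i)} ↦ ∏_i σ(r_i)^{v(i)} is a group isomorphism from G_f onto the group {η ∈ Aut(⟨Ω⟩) : η(r) ∈ Ω for every r ∈ Ω}, with inverse given by restriction η ↦ η|_Ω. -/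
noncomputable section

open Polynomial

/-!
Let `φ : ℤⁿ → ℂˣ` send `v` to `∏ rᵢ ^ vᵢ`. Its image is `⟨Ω⟩` and its kernel is the lattice of
multiplicative relations among the roots, so `σ ∈ G_f` says exactly that `v ↦ ∏ σ(rᵢ) ^ vᵢ`
factors through `φ`, giving an endomorphism of `⟨Ω⟩` with `rᵢ ↦ σ(rᵢ)`. Since `⟨Ω⟩` is generated by
the roots, these endomorphisms compose like the permutations, hence are automorphisms, and distinct
roots make `σ` recoverable from its automorphism. Conversely an automorphism `η` mapping `Ω` into
`Ω` permutes the roots, and applying `η` to a relation shows that this permutation lies in `G_f`.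
-/

open Function

theorem Submonoid.inv_mem_of_finite {G : Type*} [Group G] [Finite G] (S : Submonoid G) {x : G}
    (hx : x ∈ S) : x⁻¹ ∈ S := by
  have h : x⁻¹ ∈ (Subgroup.closure (S : Set G)).toSubmonoid :=
    Subgroup.inv_mem _ (Subgroup.subset_closure hx)
  rwa [Subgroup.closure_toSubmonoid_of_finite, Submonoid.closure_eq] at h

section Generators

variable {G : Type*} [Group G] {ι : Type*} (R : ι → G)

def closureGenerator (i : ι) : Subgroup.closure (Set.range R) :=
  ⟨R i, Subgroup.subset_closure (Set.mem_range_self i)⟩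

theorem hom_ext_closureGenerator {M : Type*} [Monoid M]
    {f g : Subgroup.closure (Set.range R) →* M}
    (h : ∀ i, f (closureGenerator R i) = g (closureGenerator R i)) : f = g :=
  MonoidHom.eq_of_eqOn_dense Subgroup.closure_closure_coe_preimage <| by
    rintro x ⟨i, hi⟩
    obtain rfl : x = closureGenerator R i := Subtype.ext hi.symm
    exact h i

end Generators

section ExponentVectors

variable {G : Type*} [CommGroup G] {ι : Type*} [Fintype ι] (R : ι → G)

def expEval : Multiplicative (ι → ℤ) →* G where
  toFun v := ∏ i, R i ^ v.toAdd i
  map_one' := by simp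
  map_mul' v w := by simp [zpow_add, Finset.prod_mul_distrib]

theorem expEval_ofAdd (v : ι → ℤ) : expEval R (.ofAdd v) = ∏ i, R i ^ v i := rfl

theorem expEval_single [DecidableEq ι] (i : ι) : expEval R (.ofAdd (Pi.single i 1)) = R i := by
  rw [expEval_ofAdd, Finset.prod_eq_single i (fun j _ hj => by simp [hj]) (by simp)]
  simp

theorem map_expEval {G' : Type*} [CommGroup G'] (ψ : G →* G') (v : Multiplicative (ι → ℤ)) :
    ψ (expEval R v) = expEval (ψ ∘ R) v := by
  simp [expEval, map_prod, map_zpow]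

theorem expEval_comp_perm (σ : Equiv.Perm ι) (v : ι → ℤ) :
    expEval (R ∘ σ) (.ofAdd v) = expEval R (.ofAdd (v ∘ σ.symm)) := by
  simp only [expEval_ofAdd, comp_apply]
  exact Fintype.prod_equiv σ _ _ (by simp)

theorem range_expEval : (expEval R).range = Subgroup.closure (Set.range R) := by
  classical
  refine le_antisymm ?_ ((Subgroup.closure_le _).2 ?_)
  · rintro _ ⟨v, rfl⟩
    exact prod_mem fun i _ => zpow_mem (Subgroup.subset_closure (Set.mem_range_self i)) _
  · rintro _ ⟨i, rfl⟩
    exact ⟨.ofAdd (Pi.single i 1), expEval_single R i⟩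

/-- The paper's `G_f`: `(expEval R).ker` is the lattice of multiplicative relations among the
`R i`. -/
def relationStabilizerMonoid : Submonoid (Equiv.Perm ι) where
  carrier := {σ | (expEval R).ker ≤ (expEval (R ∘ σ)).ker}
  one_mem' _ hv := hv
  mul_mem' {σ τ} hσ hτ v hv := by
    have hvτ : expEval R (.ofAdd (v.toAdd ∘ τ.symm)) = 1 := by
      rw [← expEval_comp_perm]; exact hτ hv
    show expEval ((R ∘ σ) ∘ τ) v = 1
    rw [← ofAdd_toAdd v, expEval_comp_perm]
    exact hσ hvτ

/-- The defining condition is one-sided; closure under inverses comes from the finiteness of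
`Equiv.Perm ι`. -/
def relationStabilizer : Subgroup (Equiv.Perm ι) :=
  { relationStabilizerMonoid R with
    inv_mem' := (relationStabilizerMonoid R).inv_mem_of_finite }

end ExponentVectors

section InducedAutomorphism

variable {G : Type*} [CommGroup G] {ι : Type*} [Fintype ι] (R : ι → G)

theorem ker_expEval_subtype {H : Subgroup G} (S : ι → H) :
    (expEval S).ker = (expEval fun i => (S i : G)).ker := by
  ext v
  rw [MonoidHom.mem_ker, MonoidHom.mem_ker, ← OneMemClass.coe_eq_one]
  exact Eq.congr_left (map_expEval S H.subtype v)

theorem expEval_closureGenerator_surjective : Surjective (expEval (closureGenerator R)) := by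
  rintro ⟨x, hx⟩
  rw [← range_expEval] at hx
  obtain ⟨v, rfl⟩ := hx
  exact ⟨v, Subtype.ext (map_expEval (closureGenerator R) (Subgroup.closure _).subtype v)⟩

/-- `∏ R i ^ v i ↦ ∏ R (σ i) ^ v i`, well defined because `σ` maps relations to relations. -/
def inducedEnd (σ : relationStabilizer R) :
    Subgroup.closure (Set.range R) →* Subgroup.closure (Set.range R) :=
  (expEval (closureGenerator R)).liftOfSurjective (expEval_closureGenerator_surjective R)
    ⟨expEval (closureGenerator R ∘ σ), by
      rw [ker_expEval_subtype, ker_expEval_subtype]; exact σ.2⟩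

theorem inducedEnd_closureGenerator (σ : relationStabilizer R) (i : ι) :
    inducedEnd R σ (closureGenerator R i) = closureGenerator R ((σ : Equiv.Perm ι) i) := by
  classical
  rw [← expEval_single (closureGenerator R) i, inducedEnd,
    MonoidHom.liftOfRightInverse_comp_apply]
  exact expEval_single (closureGenerator R ∘ σ) i

theorem inducedEnd_one : inducedEnd R 1 = MonoidHom.id _ :=
  hom_ext_closureGenerator R fun i => inducedEnd_closureGenerator R 1 i

theorem inducedEnd_mul (σ τ : relationStabilizer R) :
    inducedEnd R (σ * τ) = (inducedEnd R σ).comp (inducedEnd R τ) :=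
  hom_ext_closureGenerator R fun i => by simp [inducedEnd_closureGenerator]

def inducedAut : relationStabilizer R →* MulAut (Subgroup.closure (Set.range R)) where
  toFun σ := (inducedEnd R σ).toMulEquiv (inducedEnd R σ⁻¹)
    (by rw [← inducedEnd_mul, inv_mul_cancel, inducedEnd_one])
    (by rw [← inducedEnd_mul, mul_inv_cancel, inducedEnd_one])
  map_one' := MulEquiv.toMonoidHom_injective (inducedEnd_one R)
  map_mul' σ τ := MulEquiv.toMonoidHom_injective (inducedEnd_mul R σ τ)

theorem coe_inducedAut_apply (σ : relationStabilizer R) {x : Subgroup.closure (Set.range R)}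
    {i : ι} (hx : (x : G) = R i) : (inducedAut R σ x : G) = R ((σ : Equiv.Perm ι) i) := by
  obtain rfl : x = closureGenerator R i := Subtype.ext hx
  exact congrArg Subtype.val (inducedEnd_closureGenerator R σ i)

theorem inducedAut_injective (hR : Injective R) : Injective (inducedAut R) := by
  intro σ τ h
  ext i
  apply hR
  rw [← coe_inducedAut_apply R σ (x := closureGenerator R i) rfl,
    ← coe_inducedAut_apply R τ (x := closureGenerator R i) rfl, h]

theorem exists_inducedAut_eq (hR : Injective R) (η : MulAut (Subgroup.closure (Set.range R)))
    (hη : ∀ (x : Subgroup.closure (Set.range R)) (i : ι), (x : G) = R i →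
      ∃ j, (η x : G) = R j) :
    ∃ σ, inducedAut R σ = η := by
  choose g hg using fun i => hη (closureGenerator R i) i rfl
  have hg_inj : Injective g := by
    intro i j hij
    have h : η (closureGenerator R i) = η (closureGenerator R j) :=
      Subtype.ext (by rw [hg i, hg j, hij])
    exact hR (congrArg Subtype.val (η.injective h))
  set σ := Equiv.ofBijective g (Finite.injective_iff_bijective.mp hg_inj)
  have hησ : ∀ v, (η (expEval (closureGenerator R) v) : G) = expEval (R ∘ σ) v := fun v => by
    rw [← MulEquiv.coe_toMonoidHom, ← Subgroup.coe_subtype, ← MonoidHom.comp_apply, map_expEval]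
    exact congrArg (expEval · v) (funext hg)
  have hσ : σ ∈ relationStabilizer R := by
    intro v hv
    replace hv : v ∈ (expEval (closureGenerator R)).ker :=
      (ker_expEval_subtype (closureGenerator R)).ge hv
    rw [MonoidHom.mem_ker, ← hησ, MonoidHom.mem_ker.mp hv, map_one, OneMemClass.coe_one]
  refine ⟨⟨σ, hσ⟩, MulEquiv.toMonoidHom_injective (hom_ext_closureGenerator R fun i => ?_)⟩
  exact Subtype.ext ((coe_inducedAut_apply R _ rfl).trans (hg i).symm)

end InducedAutomorphism

theorem Polynomial.ne_zero_of_aeval_eq_zero {K A : Type*} [Field K] [CommRing A] [Nontrivial A]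
    [Algebra K A] {f : K[X]} (hf0 : f.eval 0 ≠ 0) {z : A} (hz : aeval z f = 0) : z ≠ 0 := by
  rintro rfl
  rw [aeval_def, eval₂_at_zero, coeff_zero_eq_eval_zero, map_eq_zero] at hz
  exact hf0 hz

theorem galoisLike_coe_eq_relationStabilizer {ι : Type*} [Fintype ι] (R : ι → ℂˣ) :
    GaloisLike (fun i => (R i : ℂ)) = relationStabilizer R := by
  have key (S : ι → ℂˣ) (v : ι → ℤ) : ∏ i, (S i : ℂ) ^ v i = 1 ↔ .ofAdd v ∈ (expEval S).ker := by
    rw [MonoidHom.mem_ker, expEval_ofAdd, ← Units.val_eq_one]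
    push_cast
    rfl
  ext σ
  exact ⟨fun h v hv => (key (R ∘ σ) _).1 (h v ((key R v).2 hv)),
    fun h v hv => (key (R ∘ σ) v).2 (h ((key R v).1 hv))⟩

theorem statement6_general (f : Polynomial ℚ) (hf0 : f.eval 0 ≠ 0) (n : ℕ)
    (r : Fin n → ℂ) (hinj : Function.Injective r)
    (hroot : ∀ i, Polynomial.aeval (r i) f = 0)
    (Ω' : Subgroup ℂˣ) (hΩ : Ω' = Subgroup.closure {x : ℂˣ | ∃ i, (x : ℂ) = r i})
    (A : Set (MulAut ↥Ω'))
    (hA : A = {η : MulAut ↥Ω' | ∀ (x : ↥Ω') (i : Fin n), ((x : ℂˣ) : ℂ) = r i →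
        ∃ j : Fin n, (((η x : ↥Ω') : ℂˣ) : ℂ) = r j}) :
    ∃ E : Equiv.Perm (Fin n) → MulAut ↥Ω',
      -- E σ is the automorphism determined by rᵢ ↦ σ(rᵢ)
      (∀ σ ∈ GaloisLike r, ∀ (x : ↥Ω') (i : Fin n), ((x : ℂˣ) : ℂ) = r i →
          (((E σ x : ↥Ω') : ℂˣ) : ℂ) = r (σ i)) ∧
      -- E maps G_f into A
      (∀ σ ∈ GaloisLike r, E σ ∈ A) ∧
      -- E is multiplicative on G_f
      (∀ σ ∈ GaloisLike r, ∀ τ ∈ GaloisLike r, E (σ * τ) = E σ * E τ) ∧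
      -- E is injective on G_f
      (∀ σ ∈ GaloisLike r, ∀ τ ∈ GaloisLike r, E σ = E τ → σ = τ) ∧
      -- E is surjective onto A, the inverse being restriction to Ω:
      -- for η ∈ A the unique preimage σ satisfies η(rᵢ) = r_{σ i}
      (∀ η ∈ A, ∃ σ ∈ GaloisLike r, E σ = η ∧
          ∀ (x : ↥Ω') (i : Fin n), ((x : ℂˣ) : ℂ) = r i →
            (((η x : ↥Ω') : ℂˣ) : ℂ) = r (σ i)) := by
  obtain ⟨R, rfl⟩ : ∃ R : Fin n → ℂˣ, r = fun i => (R i : ℂ) :=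
    ⟨fun i => Units.mk0 (r i) (ne_zero_of_aeval_eq_zero hf0 (hroot i)), rfl⟩
  obtain rfl : Ω' = Subgroup.closure (Set.range R) := by
    rw [hΩ]; congr 1; ext x; simp [Units.ext_iff, eq_comm]
  subst hA
  simp only [galoisLike_coe_eq_relationStabilizer, Units.val_inj, SetLike.mem_coe]
  classical
  let E σ := if hσ : σ ∈ relationStabilizer R then inducedAut R ⟨σ, hσ⟩ else 1
  have hE : ∀ σ (hσ : σ ∈ relationStabilizer R), E σ = inducedAut R ⟨σ, hσ⟩ :=
    fun σ hσ => dif_pos hσ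
  have hE_apply : ∀ σ ∈ relationStabilizer R, ∀ (x : Subgroup.closure (Set.range R)) i,
      (x : ℂˣ) = R i → (E σ x : ℂˣ) = R (σ i) := fun σ hσ x i hx => by
    rw [hE σ hσ]; exact coe_inducedAut_apply R ⟨σ, hσ⟩ hx
  refine ⟨E, hE_apply, fun σ hσ x i hx => ⟨σ i, hE_apply σ hσ x i hx⟩, fun σ hσ τ hτ => ?_,
    fun σ hσ τ hτ h => ?_, fun η hη => ?_⟩
  · rw [hE σ hσ, hE τ hτ, hE _ (mul_mem hσ hτ), ← map_mul]; rfl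
  · rw [hE σ hσ, hE τ hτ] at h
    exact congrArg Subtype.val (inducedAut_injective R hinj.of_comp h)
  · obtain ⟨σ, rfl⟩ := exists_inducedAut_eq R hinj.of_comp η hη
    exact ⟨σ, σ.2, hE σ σ.2, fun x i hx => coe_inducedAut_apply R σ hx⟩

/-- Let `⟨Ω⟩ ≤ ℂˣ` be the multiplicative group generated by the roots of
`f`. The map sending `σ ∈ G_f` to the automorphism of `⟨Ω⟩` determined by
`∏ rᵢ^{vᵢ} ↦ ∏ σ(rᵢ)^{vᵢ}` (i.e. sending each root `rᵢ` to `σ(rᵢ)`) is a group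
isomorphism from `G_f` onto `{η ∈ Aut(⟨Ω⟩) : η(Ω) ⊆ Ω}`, with inverse given by
restriction to `Ω`. -/
theorem statement6 (f : Polynomial ℚ) (hf0 : f.eval 0 ≠ 0) (n : ℕ) (hn : n = f.natDegree)
    (r : Fin n → ℂ) (hinj : Function.Injective r)
    (hroot : ∀ i, Polynomial.aeval (r i) f = 0)
    (hall : ∀ z : ℂ, Polynomial.aeval z f = 0 → ∃ i, r i = z)
    (Ω' : Subgroup ℂˣ) (hΩ : Ω' = Subgroup.closure {x : ℂˣ | ∃ i, (x : ℂ) = r i})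
    (A : Set (MulAut ↥Ω'))
    (hA : A = {η : MulAut ↥Ω' | ∀ (x : ↥Ω') (i : Fin n), ((x : ℂˣ) : ℂ) = r i →
        ∃ j : Fin n, (((η x : ↥Ω') : ℂˣ) : ℂ) = r j}) :
    ∃ E : Equiv.Perm (Fin n) → MulAut ↥Ω',
      -- E σ is the automorphism determined by rᵢ ↦ σ(rᵢ)
      (∀ σ ∈ GaloisLike r, ∀ (x : ↥Ω') (i : Fin n), ((x : ℂˣ) : ℂ) = r i →
          (((E σ x : ↥Ω') : ℂˣ) : ℂ) = r (σ i)) ∧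
      -- E maps G_f into A
      (∀ σ ∈ GaloisLike r, E σ ∈ A) ∧
      -- E is multiplicative on G_f
      (∀ σ ∈ GaloisLike r, ∀ τ ∈ GaloisLike r, E (σ * τ) = E σ * E τ) ∧
      -- E is injective on G_f
      (∀ σ ∈ GaloisLike r, ∀ τ ∈ GaloisLike r, E σ = E τ → σ = τ) ∧
      -- E is surjective onto A, the inverse being restriction to Ω:
      -- for η ∈ A the unique preimage σ satisfies η(rᵢ) = r_{σ i}
      (∀ η ∈ A, ∃ σ ∈ GaloisLike r, E σ = η ∧
          ∀ (x : ↥Ω') (i : Fin n), ((x : ℂˣ) : ℂ) = r i →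
            (((η x : ↥Ω') : ℂˣ) : ℂ) = r (σ i)) :=
  statement6_general f hf0 n r hinj hroot Ω' hΩ A hA

end
end

section
/- Suppose f ∈ ℚ[x] with f(0) ≠ 0 has no multiple roots, and let ⟨Ω⟩_ℚ = {c·∏_i r_i^{v(i)} : c ∈ ℚ*, v ∈ ℤ^n} be the subgroup of ℂ* generated by the roots of f together with ℚ*. Then the map sending σ ∈ G_f^B to the automorphism of ⟨Ω⟩_ℚ determined by c·∏_i r_i^{v(i)} ↦ c·∏_i σ(r_i)^{v(i)} is a group isomorphism from G_f^B onto the group {η ∈ Aut(⟨Ω⟩_ℚ) : η(r) ∈ Ω for every r ∈ Ω, and η(c) = c for every c ∈ ℚ*}, with inverse given by restriction η ↦ η|_Ω. -/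
noncomputable section

open Polynomial

section Aux7

variable {n : ℕ} {r : Fin n → ℂ}

lemma GB_one7 : (1 : Equiv.Perm (Fin n)) ∈ GaloisLikeB r := by
  intro v hv; simp

lemma GB_mul7 {σ τ : Equiv.Perm (Fin n)} (hσ : σ ∈ GaloisLikeB r) (hτ : τ ∈ GaloisLikeB r) :
    σ * τ ∈ GaloisLikeB r := by
  intro v hv
  have h1 : ∏ j, r j ^ v (τ⁻¹ j) = ∏ i, r i ^ v i := by
    rw [← hτ v hv, ← Equiv.prod_comp τ (fun j => r j ^ v (τ⁻¹ j))]
    simp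
  have h2 : ∏ j, r (σ j) ^ v (τ⁻¹ j) = ∏ j, r j ^ v (τ⁻¹ j) :=
    hσ (fun j => v (τ⁻¹ j)) (by show IsRat (∏ j, r j ^ v (τ⁻¹ j)); rw [h1]; exact hv)
  calc ∏ i, r ((σ * τ) i) ^ v i = ∏ j, r (σ j) ^ v (τ⁻¹ j) := by
        rw [← Equiv.prod_comp τ (fun j => r (σ j) ^ v (τ⁻¹ j))]
        simp [Equiv.Perm.mul_apply]
    _ = ∏ j, r j ^ v (τ⁻¹ j) := h2
    _ = ∏ i, r i ^ v i := h1

lemma GB_pow7 {σ : Equiv.Perm (Fin n)} (hσ : σ ∈ GaloisLikeB r) (k : ℕ) :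
    σ ^ k ∈ GaloisLikeB r := by
  induction k with
  | zero => simpa using (GB_one7 (r := r))
  | succ k ih => rw [pow_succ]; exact GB_mul7 ih hσ

lemma GB_inv7 {σ : Equiv.Perm (Fin n)} (hσ : σ ∈ GaloisLikeB r) :
    σ⁻¹ ∈ GaloisLikeB r := by
  have h1 : orderOf σ ≠ 0 := (orderOf_pos σ).ne'
  have hord : σ ^ (orderOf σ - 1) = σ⁻¹ := by
    apply eq_inv_of_mul_eq_one_left
    rw [← pow_succ, Nat.sub_add_cancel (Nat.one_le_iff_ne_zero.mpr h1)]
    exact pow_orderOf_eq_one σ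
  rw [← hord]
  exact GB_pow7 hσ _

end Aux7

/-- Let `⟨Ω⟩_ℚ ≤ ℂˣ` be the multiplicative group generated by the roots
of `f` together with `ℚ*`. The map sending `σ ∈ G_f^B` to the automorphism of `⟨Ω⟩_ℚ`
determined by `c·∏ rᵢ^{vᵢ} ↦ c·∏ σ(rᵢ)^{vᵢ}` (i.e. sending each root `rᵢ` to `σ(rᵢ)` and
fixing `ℚ*` pointwise) is a group isomorphism from `G_f^B` onto
`{η ∈ Aut(⟨Ω⟩_ℚ) : η(Ω) ⊆ Ω and η fixes ℚ* pointwise}`, with inverse given by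
restriction to `Ω`. -/
theorem statement7 (f : Polynomial ℚ) (hf0 : f.eval 0 ≠ 0) (n : ℕ) (hn : n = f.natDegree)
    (r : Fin n → ℂ) (hinj : Function.Injective r)
    (hroot : ∀ i, Polynomial.aeval (r i) f = 0)
    (hall : ∀ z : ℂ, Polynomial.aeval z f = 0 → ∃ i, r i = z)
    (Ω' : Subgroup ℂˣ)
    (hΩ : Ω' = Subgroup.closure
        ({x : ℂˣ | ∃ i, (x : ℂ) = r i} ∪ {x : ℂˣ | ∃ q : ℚ, (x : ℂ) = (q : ℂ)}))
    (A : Set (MulAut ↥Ω'))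
    (hA : A = {η : MulAut ↥Ω' |
        (∀ (x : ↥Ω') (i : Fin n), ((x : ℂˣ) : ℂ) = r i →
          ∃ j : Fin n, (((η x : ↥Ω') : ℂˣ) : ℂ) = r j) ∧
        (∀ (x : ↥Ω') (q : ℚ), ((x : ℂˣ) : ℂ) = (q : ℂ) →
          (((η x : ↥Ω') : ℂˣ) : ℂ) = (q : ℂ))}) :
    ∃ E : Equiv.Perm (Fin n) → MulAut ↥Ω',
      -- E σ is the automorphism determined by rᵢ ↦ σ(rᵢ) and fixing ℚ* pointwise
      (∀ σ ∈ GaloisLikeB r,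
        (∀ (x : ↥Ω') (i : Fin n), ((x : ℂˣ) : ℂ) = r i →
          (((E σ x : ↥Ω') : ℂˣ) : ℂ) = r (σ i)) ∧
        (∀ (x : ↥Ω') (q : ℚ), ((x : ℂˣ) : ℂ) = (q : ℂ) →
          (((E σ x : ↥Ω') : ℂˣ) : ℂ) = (q : ℂ))) ∧
      -- E maps G_f^B into A
      (∀ σ ∈ GaloisLikeB r, E σ ∈ A) ∧
      -- E is multiplicative on G_f^B
      (∀ σ ∈ GaloisLikeB r, ∀ τ ∈ GaloisLikeB r, E (σ * τ) = E σ * E τ) ∧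
      -- E is injective on G_f^B
      (∀ σ ∈ GaloisLikeB r, ∀ τ ∈ GaloisLikeB r, E σ = E τ → σ = τ) ∧
      -- E is surjective onto A, the inverse being restriction to Ω
      (∀ η ∈ A, ∃ σ ∈ GaloisLikeB r, E σ = η ∧
          ∀ (x : ↥Ω') (i : Fin n), ((x : ℂˣ) : ℂ) = r i →
            (((η x : ↥Ω') : ℂˣ) : ℂ) = r (σ i)) := by
  classical
  -- the roots are nonzero
  have hr0 : ∀ i, r i ≠ 0 := by
    intro i hri
    apply hf0
    have h := hroot i
    rw [hri] at h
    have h2 : (algebraMap ℚ ℂ) (f.eval 0) = 0 := by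
      rw [← Polynomial.coeff_zero_eq_eval_zero, ← Polynomial.eval₂_at_zero,
        ← Polynomial.aeval_def]
      exact h
    exact (algebraMap ℚ ℂ).injective (by rw [h2, map_zero])
  -- the roots as units
  let ru : Fin n → ℂˣ := fun i => Units.mk0 (r i) (hr0 i)
  have hruv : ∀ i, ((ru i : ℂˣ) : ℂ) = r i := fun _ => rfl
  -- nonzero rationals as units
  let qc : ℚˣ → ℂˣ := fun c => Units.mk0 ((c : ℚ) : ℂ) (by exact_mod_cast c.ne_zero)
  have hqcv : ∀ c, ((qc c : ℂˣ) : ℂ) = ((c : ℚ) : ℂ) := fun _ => rfl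
  have hqc_mul : ∀ a b : ℚˣ, qc (a * b) = qc a * qc b := by
    intro a b; apply Units.ext; push_cast [hqcv]; norm_num
  have hqc_inv : ∀ a : ℚˣ, qc a⁻¹ = (qc a)⁻¹ := by
    intro a; apply Units.ext
    rw [hqcv]
    push_cast
    rfl
  -- membership of generators
  have hmemr : ∀ i, ru i ∈ Ω' := by
    intro i; rw [hΩ]; exact Subgroup.subset_closure (Or.inl ⟨i, rfl⟩)
  have hmemq : ∀ c : ℚˣ, qc c ∈ Ω' := by
    intro c; rw [hΩ]; exact Subgroup.subset_closure (Or.inr ⟨(c : ℚ), rfl⟩)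
  -- coercion of products of unit powers
  have hcoe : ∀ (g : Fin n → ℂˣ) (w : Fin n → ℤ),
      ((∏ i, g i ^ w i : ℂˣ) : ℂ) = ∏ i, ((g i : ℂˣ) : ℂ) ^ w i := by
    intro g w
    calc ((∏ i, g i ^ w i : ℂˣ) : ℂ) = (Units.coeHom ℂ) (∏ i, g i ^ w i) := rfl
      _ = ∏ i, (Units.coeHom ℂ) (g i ^ w i) := map_prod _ _ _
      _ = ∏ i, ((g i : ℂˣ) : ℂ) ^ w i := by
          refine Finset.prod_congr rfl fun i _ => ?_
          exact map_zpow (Units.coeHom ℂ) (g i) (w i)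
  -- every element of Ω' has the standard form
  have hrep : ∀ x : ℂˣ, x ∈ Ω' →
      ∃ (v : Fin n → ℤ) (c : ℚˣ), x = qc c * ∏ i, ru i ^ v i := by
    intro x hx
    rw [hΩ] at hx
    induction hx using Subgroup.closure_induction with
    | mem x hx =>
      rcases hx with ⟨i, hi⟩ | ⟨q, hq⟩
      · refine ⟨fun j => if j = i then 1 else 0, 1, Units.ext ?_⟩
        rw [Units.val_mul, hcoe, hi, hqcv]
        rw [Finset.prod_eq_single i (fun j _ hj => by simp [hj])
          (fun h => absurd (Finset.mem_univ i) h)]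
        simp [hruv]
      · have hq0 : q ≠ 0 := by
          intro h
          exact (Units.ne_zero x) (by rw [hq, h]; norm_num)
        refine ⟨0, Units.mk0 q hq0, Units.ext ?_⟩
        rw [Units.val_mul, hcoe, hq, hqcv]
        simp
    | one =>
      refine ⟨0, 1, Units.ext ?_⟩
      rw [Units.val_mul, hcoe, hqcv]
      simp
    | mul x y hx hy ihx ihy =>
      obtain ⟨vx, cx, hxe⟩ := ihx
      obtain ⟨vy, cy, hye⟩ := ihy
      refine ⟨fun i => vx i + vy i, cx * cy, ?_⟩
      rw [hxe, hye, hqc_mul]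
      have : (∏ i, ru i ^ (vx i + vy i)) = (∏ i, ru i ^ vx i) * ∏ i, ru i ^ vy i := by
        rw [← Finset.prod_mul_distrib]
        exact Finset.prod_congr rfl fun i _ => zpow_add (ru i) (vx i) (vy i)
      rw [this]
      exact mul_mul_mul_comm _ _ _ _
    | inv x hx ih =>
      obtain ⟨vx, cx, hxe⟩ := ih
      refine ⟨fun i => -vx i, cx⁻¹, ?_⟩
      rw [hxe, mul_inv, hqc_inv]
      have : (∏ i, ru i ^ (-vx i)) = (∏ i, ru i ^ vx i)⁻¹ := by
        rw [← Finset.prod_inv_distrib]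
        exact Finset.prod_congr rfl fun i _ => zpow_neg (ru i) (vx i)
      rw [this]
  -- choose a representation for each element
  choose vv cc hvc using fun (x : ↥Ω') => hrep (x : ℂˣ) x.2
  -- splitting of product of zpowers over a difference of exponents
  have hsplit : ∀ (s : Fin n → ℂ), (∀ i, s i ≠ 0) → ∀ (a b : Fin n → ℤ),
      ∏ i, s i ^ (a i - b i) = (∏ i, s i ^ a i) / (∏ i, s i ^ b i) := by
    intro s hs a b
    rw [← Finset.prod_div_distrib]
    exact Finset.prod_congr rfl fun i _ => zpow_sub₀ (hs i) _ _
  -- the raw map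
  have hmemP : ∀ (σ : Equiv.Perm (Fin n)) (x : ↥Ω'),
      qc (cc x) * ∏ i, ru (σ i) ^ vv x i ∈ Ω' :=
    fun σ x => mul_mem (hmemq _) (prod_mem fun i _ => zpow_mem (hmemr _) _)
  let F : Equiv.Perm (Fin n) → ↥Ω' → ↥Ω' := fun σ x =>
    ⟨qc (cc x) * ∏ i, ru (σ i) ^ vv x i, hmemP σ x⟩
  have hFval : ∀ σ x, ((F σ x : ↥Ω') : ℂˣ) = qc (cc x) * ∏ i, ru (σ i) ^ vv x i :=
    fun _ _ => rfl
  -- key: the map is independent of the chosen representation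
  have mapspec : ∀ σ ∈ GaloisLikeB r, ∀ (x : ↥Ω') (w : Fin n → ℤ) (c : ℚˣ),
      (x : ℂˣ) = qc c * ∏ i, ru i ^ w i →
      ((F σ x : ↥Ω') : ℂˣ) = qc c * ∏ i, ru (σ i) ^ w i := by
    intro σ hσ x w c hx
    have h0 : qc (cc x) * ∏ i, ru i ^ vv x i = qc c * ∏ i, ru i ^ w i :=
      (hvc x).symm.trans hx
    have h0c : ((cc x : ℚ) : ℂ) * ∏ i, r i ^ vv x i = ((c : ℚ) : ℂ) * ∏ i, r i ^ w i := by
      have := congrArg Units.val h0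
      rw [Units.val_mul, Units.val_mul, hcoe, hcoe, hqcv, hqcv] at this
      simpa [hruv] using this
    have hne1 : (∏ i, r i ^ w i) ≠ 0 :=
      Finset.prod_ne_zero_iff.mpr fun i _ => zpow_ne_zero _ (hr0 i)
    have hccne : ((cc x : ℚ) : ℂ) ≠ 0 := by exact_mod_cast (cc x).ne_zero
    have hrat : ∏ i, r i ^ (vv x i - w i) = ((c : ℚ) : ℂ) / ((cc x : ℚ) : ℂ) := by
      rw [hsplit r hr0, div_eq_div_iff hne1 hccne]
      linear_combination h0c
    have hIsRat : IsRat (∏ i, r i ^ (vv x i - w i)) := by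
      refine ⟨(c : ℚ) / (cc x : ℚ), ?_⟩
      rw [hrat]; push_cast; ring
    have hσ2 := hσ (fun i => vv x i - w i) hIsRat
    have hkey : ∏ i, r (σ i) ^ (vv x i - w i) = ((c : ℚ) : ℂ) / ((cc x : ℚ) : ℂ) :=
      hσ2.trans hrat
    have hkey2 : (∏ i, r (σ i) ^ vv x i) / (∏ i, r (σ i) ^ w i)
        = ((c : ℚ) : ℂ) / ((cc x : ℚ) : ℂ) :=
      (hsplit (fun i => r (σ i)) (fun i => hr0 (σ i)) (vv x) w).symm.trans hkey
    have hne2 : (∏ i, r (σ i) ^ w i) ≠ 0 :=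
      Finset.prod_ne_zero_iff.mpr fun i _ => zpow_ne_zero _ (hr0 (σ i))
    rw [div_eq_div_iff hne2 hccne] at hkey2
    apply Units.ext
    rw [hFval, Units.val_mul, Units.val_mul, hcoe, hcoe, hqcv, hqcv]
    simp only [hruv]
    linear_combination hkey2
  -- identity
  have Fone : ∀ x, F 1 x = x := by
    intro x
    apply Subtype.ext
    rw [hFval]
    simp only [Equiv.Perm.coe_one, id_eq]
    exact (hvc x).symm
  -- composition
  have Fcomp : ∀ σ ∈ GaloisLikeB r, ∀ τ ∈ GaloisLikeB r, ∀ x,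
      F σ (F τ x) = F (σ * τ) x := by
    intro σ hσ τ hτ x
    have hrepτ : ((F τ x : ↥Ω') : ℂˣ) = qc (cc x) * ∏ j, ru j ^ vv x (τ⁻¹ j) := by
      rw [hFval]
      congr 1
      rw [← Equiv.prod_comp τ (fun j => ru j ^ vv x (τ⁻¹ j))]
      simp
    have h1 := mapspec σ hσ (F τ x) (fun j => vv x (τ⁻¹ j)) (cc x) hrepτ
    have h2 := mapspec (σ * τ) (GB_mul7 hσ hτ) x (vv x) (cc x) (hvc x)
    apply Subtype.ext
    rw [h1, h2]
    congr 1
    rw [← Equiv.prod_comp τ (fun j => ru (σ j) ^ vv x (τ⁻¹ j))]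
    simp [Equiv.Perm.mul_apply]
  -- multiplicativity
  have Fmul : ∀ σ ∈ GaloisLikeB r, ∀ x y : ↥Ω', F σ (x * y) = F σ x * F σ y := by
    intro σ hσ x y
    have hrepxy : ((x * y : ↥Ω') : ℂˣ) = qc (cc x * cc y) * ∏ i, ru i ^ (vv x i + vv y i) := by
      rw [Subgroup.coe_mul, hvc x, hvc y, hqc_mul]
      have : (∏ i, ru i ^ (vv x i + vv y i)) = (∏ i, ru i ^ vv x i) * ∏ i, ru i ^ vv y i := by
        rw [← Finset.prod_mul_distrib]
        exact Finset.prod_congr rfl fun i _ => zpow_add (ru i) (vv x i) (vv y i)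
      rw [this]
      exact mul_mul_mul_comm _ _ _ _
    have h := mapspec σ hσ (x * y) (fun i => vv x i + vv y i) (cc x * cc y) hrepxy
    apply Subtype.ext
    rw [h, Subgroup.coe_mul, hFval, hFval, hqc_mul]
    have : (∏ i, ru (σ i) ^ (vv x i + vv y i))
        = (∏ i, ru (σ i) ^ vv x i) * ∏ i, ru (σ i) ^ vv y i := by
      rw [← Finset.prod_mul_distrib]
      exact Finset.prod_congr rfl fun i _ => zpow_add (ru (σ i)) (vv x i) (vv y i)
    rw [this]
    exact mul_mul_mul_comm _ _ _ _
  -- package as automorphisms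
  let mkE : ∀ σ : Equiv.Perm (Fin n), σ ∈ GaloisLikeB r → MulAut ↥Ω' := fun σ h =>
    { toFun := F σ
      invFun := F σ⁻¹
      left_inv := fun x => by
        rw [Fcomp σ⁻¹ (GB_inv7 h) σ h x, inv_mul_cancel, Fone]
      right_inv := fun x => by
        rw [Fcomp σ h σ⁻¹ (GB_inv7 h) x, mul_inv_cancel, Fone]
      map_mul' := fun x y => Fmul σ h x y }
  let E : Equiv.Perm (Fin n) → MulAut ↥Ω' := fun σ =>
    if h : σ ∈ GaloisLikeB r then mkE σ h else MulEquiv.refl _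
  have hEdef : ∀ σ (h : σ ∈ GaloisLikeB r), E σ = mkE σ h := fun σ h => dif_pos h
  have hEapp : ∀ σ (h : σ ∈ GaloisLikeB r) (x : ↥Ω'), E σ x = F σ x := by
    intro σ h x
    rw [hEdef σ h]
    rfl
  -- the two defining properties
  have spec1 : ∀ σ ∈ GaloisLikeB r, ∀ (x : ↥Ω') (i : Fin n),
      ((x : ℂˣ) : ℂ) = r i → (((E σ x : ↥Ω') : ℂˣ) : ℂ) = r (σ i) := by
    intro σ hσ x i hx
    have hx' : (x : ℂˣ) = qc 1 * ∏ j, ru j ^ (if j = i then (1 : ℤ) else 0) := by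
      apply Units.ext
      rw [Units.val_mul, hcoe, hqcv, hx]
      rw [Finset.prod_eq_single i (fun j _ hj => by simp [hj])
        (fun h => absurd (Finset.mem_univ i) h)]
      simp [hruv]
    have h := mapspec σ hσ x (fun j => if j = i then (1 : ℤ) else 0) 1 hx'
    rw [hEapp σ hσ x, h, Units.val_mul, hcoe, hqcv]
    rw [Finset.prod_eq_single i (fun j _ hj => by simp [hj])
      (fun h => absurd (Finset.mem_univ i) h)]
    simp [hruv]
  have spec2 : ∀ σ ∈ GaloisLikeB r, ∀ (x : ↥Ω') (q : ℚ),
      ((x : ℂˣ) : ℂ) = (q : ℂ) → (((E σ x : ↥Ω') : ℂˣ) : ℂ) = (q : ℂ) := by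
    intro σ hσ x q hx
    have hq0 : q ≠ 0 := by
      intro h
      exact (Units.ne_zero (x : ℂˣ)) (by rw [hx, h]; norm_num)
    have hx' : (x : ℂˣ) = qc (Units.mk0 q hq0) * ∏ j, ru j ^ (0 : ℤ) := by
      apply Units.ext
      rw [Units.val_mul, hcoe, hqcv, hx]
      simp
    have h := mapspec σ hσ x (fun _ => (0 : ℤ)) (Units.mk0 q hq0) hx'
    rw [hEapp σ hσ x, h, Units.val_mul, hcoe, hqcv]
    simp
  refine ⟨E, ?_, ?_, ?_, ?_, ?_⟩
  · exact fun σ hσ => ⟨spec1 σ hσ, spec2 σ hσ⟩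
  · intro σ hσ
    rw [hA]
    exact ⟨fun x i hx => ⟨σ i, spec1 σ hσ x i hx⟩, spec2 σ hσ⟩
  · intro σ hσ τ hτ
    apply MulEquiv.ext
    intro x
    rw [MulAut.mul_apply, hEapp σ hσ, hEapp τ hτ, hEapp (σ * τ) (GB_mul7 hσ hτ),
      Fcomp σ hσ τ hτ x]
  · intro σ hσ τ hτ hEq
    apply Equiv.ext
    intro i
    have h1 := spec1 σ hσ ⟨ru i, hmemr i⟩ i rfl
    have h2 := spec1 τ hτ ⟨ru i, hmemr i⟩ i rfl
    rw [hEq] at h1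
    exact hinj (h1.symm.trans h2)
  · intro η hη
    rw [hA] at hη
    obtain ⟨hη1, hη2⟩ := hη
    choose s hs using fun i : Fin n => hη1 ⟨ru i, hmemr i⟩ i rfl
    have hsinj : Function.Injective s := by
      intro i i' h
      have hc : (((η ⟨ru i, hmemr i⟩ : ↥Ω') : ℂˣ) : ℂ)
          = (((η ⟨ru i', hmemr i'⟩ : ↥Ω') : ℂˣ) : ℂ) := by rw [hs i, hs i', h]
      have h2 : η ⟨ru i, hmemr i⟩ = η ⟨ru i', hmemr i'⟩ :=
        Subtype.ext (Units.ext hc)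
      have h3 := η.injective h2
      have h4 : r i = r i' := congrArg Units.val (Subtype.ext_iff.mp h3)
      exact hinj h4
    let σ : Equiv.Perm (Fin n) := Equiv.ofBijective s (Finite.injective_iff_bijective.mp hsinj)
    have hσapp : ∀ i, σ i = s i := fun _ => rfl
    -- coercion of products in the subgroup
    have hsub : ∀ (v : Fin n → ℤ),
        ((∏ i, (⟨ru i, hmemr i⟩ : ↥Ω') ^ v i : ↥Ω') : ℂˣ) = ∏ i, ru i ^ v i := by
      intro v
      calc ((∏ i, (⟨ru i, hmemr i⟩ : ↥Ω') ^ v i : ↥Ω') : ℂˣ)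
          = Ω'.subtype (∏ i, (⟨ru i, hmemr i⟩ : ↥Ω') ^ v i) := rfl
        _ = ∏ i, Ω'.subtype ((⟨ru i, hmemr i⟩ : ↥Ω') ^ v i) := map_prod _ _ _
        _ = ∏ i, ru i ^ v i := by
            refine Finset.prod_congr rfl fun i _ => ?_
            rw [map_zpow]
            rfl
    have hηprod : ∀ (v : Fin n → ℤ),
        (((η (∏ i, (⟨ru i, hmemr i⟩ : ↥Ω') ^ v i) : ↥Ω') : ℂˣ) : ℂ)
          = ∏ i, r (s i) ^ v i := by
      intro v
      rw [map_prod]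
      have : ((∏ i, η ((⟨ru i, hmemr i⟩ : ↥Ω') ^ v i) : ↥Ω') : ℂˣ)
          = ∏ i, ((η ⟨ru i, hmemr i⟩ : ↥Ω') : ℂˣ) ^ v i := by
        calc ((∏ i, η ((⟨ru i, hmemr i⟩ : ↥Ω') ^ v i) : ↥Ω') : ℂˣ)
            = Ω'.subtype (∏ i, η ((⟨ru i, hmemr i⟩ : ↥Ω') ^ v i)) := rfl
          _ = ∏ i, Ω'.subtype (η ((⟨ru i, hmemr i⟩ : ↥Ω') ^ v i)) := map_prod _ _ _
          _ = ∏ i, ((η ⟨ru i, hmemr i⟩ : ↥Ω') : ℂˣ) ^ v i := by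
              refine Finset.prod_congr rfl fun i _ => ?_
              rw [map_zpow, map_zpow]
              rfl
      rw [this, hcoe]
      refine Finset.prod_congr rfl fun i _ => ?_
      rw [hs i]
    have hσGB : σ ∈ GaloisLikeB r := by
      intro v hv
      obtain ⟨q, hq⟩ := hv
      have hXc : ((((∏ i, (⟨ru i, hmemr i⟩ : ↥Ω') ^ v i : ↥Ω') : ℂˣ)) : ℂ)
          = ∏ i, r i ^ v i := by
        rw [hsub v, hcoe]
        exact Finset.prod_congr rfl fun i _ => by rw [hruv]
      have hXq := hη2 _ q (hXc.trans hq)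
      have h2 := hηprod v
      calc ∏ i, r (σ i) ^ v i = ∏ i, r (s i) ^ v i := rfl
        _ = (q : ℂ) := h2.symm.trans hXq
        _ = ∏ i, r i ^ v i := hq.symm
    have hEη : E σ = η := by
      apply MulEquiv.ext
      intro x
      have hxdec : x = (⟨qc (cc x), hmemq _⟩ : ↥Ω') * ∏ i, (⟨ru i, hmemr i⟩ : ↥Ω') ^ vv x i := by
        apply Subtype.ext
        rw [Subgroup.coe_mul, hsub (vv x)]
        exact hvc x
      have hq1 : (((η ⟨qc (cc x), hmemq _⟩ : ↥Ω') : ℂˣ) : ℂ) = ((cc x : ℚ) : ℂ) :=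
        hη2 _ (cc x : ℚ) rfl
      have h1 : (((η x : ↥Ω') : ℂˣ) : ℂ) = ((cc x : ℚ) : ℂ) * ∏ i, r (s i) ^ vv x i := by
        conv_lhs => rw [hxdec]
        rw [map_mul, Subgroup.coe_mul, Units.val_mul, hq1, hηprod (vv x)]
      have h2 : (((E σ x : ↥Ω') : ℂˣ) : ℂ) = ((cc x : ℚ) : ℂ) * ∏ i, r (σ i) ^ vv x i := by
        rw [hEapp σ hσGB x, hFval, Units.val_mul, hcoe, hqcv]
        simp only [hruv]
      apply Subtype.ext
      apply Units.ext
      rw [h1, h2]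
      rfl
    exact ⟨σ, hσGB, hEη, fun x i hx => by rw [← hEη]; exact spec1 σ hσGB x i hx⟩

end
end

section
/- Let f ∈ ℚ[x] with f(0) ≠ 0 have no multiple roots, and suppose the Galois-like group G_f^B is transitive on the roots. Then the lattice R_f is trivial if and only if the lattice R_f^ℚ is trivial. -/
noncomputable section

open Polynomial

/-- Let `f ∈ ℚ[x]` with `f(0) ≠ 0` have no multiple roots, and suppose
the Galois-like group `G_f^B` is transitive on the roots. Then the lattice `R_f` is
trivial iff the lattice `R_f^ℚ` is trivial. -/
theorem statement14 (f : Polynomial ℚ) (hf0 : f.eval 0 ≠ 0) (n : ℕ) (hn : n = f.natDegree)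
    (r : Fin n → ℂ) (hinj : Function.Injective r)
    (hroot : ∀ i, Polynomial.aeval (r i) f = 0)
    (hall : ∀ z : ℂ, Polynomial.aeval z f = 0 → ∃ i, r i = z)
    (htrans : SetTransitive (GaloisLikeB r)) :
    VecLatticeTrivial r ↔ VecLatticeQTrivial r := by
  have hr0 : ∀ i, r i ≠ 0 := by
    intro i hri
    have h := hroot i
    rw [hri] at h
    have : (algebraMap ℚ ℂ) (f.eval 0) = 0 := by
      rw [← h]; simp [Polynomial.aeval_def, Polynomial.eval₂_at_zero, Polynomial.coeff_zero_eq_eval_zero]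
    exact hf0 (by exact_mod_cast (map_eq_zero_iff _ (algebraMap ℚ ℂ).injective).mp this)
  constructor
  · intro h u hu i j
    have key : ∀ σ ∈ GaloisLikeB r, ∀ k, u (σ k) = u k := by
      intro σ hσ k
      have hp : (∏ i, r (σ i) ^ u i) = ∏ i, r i ^ u i := hσ u hu
      have hre : (∏ i, r (σ i) ^ u i) = ∏ i, r i ^ u (σ.symm i) := by
        rw [← Equiv.prod_comp σ (fun i => r i ^ u (σ.symm i))]
        simp
      set v : Fin n → ℤ := fun i => u i - u (σ.symm i) with hv
      have h1 : (∏ i, r i ^ v i) = 1 := by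
        have : (∏ i, r i ^ v i) = (∏ i, r i ^ u i) / (∏ i, r i ^ u (σ.symm i)) := by
          rw [← Finset.prod_div_distrib]
          exact Finset.prod_congr rfl fun i _ => zpow_sub₀ (hr0 i) _ _
        rw [this, ← hre, hp]
        exact div_self (Finset.prod_ne_zero_iff.mpr fun i _ => zpow_ne_zero _ (hr0 i))
      have hconst : ∀ a b : Fin n, v a = v b := h v h1
      have hsum : (∑ i, v i) = 0 := by
        simp only [hv, Finset.sum_sub_distrib]
        rw [Equiv.sum_comp σ.symm u]
        ring
      have hvk : ∀ a, v a = 0 := by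
        intro a
        have : (∑ i : Fin n, v i) = (Fintype.card (Fin n)) • v a := by
          rw [Finset.sum_congr rfl fun b _ => hconst b a]
          simp [Finset.sum_const]
        rw [hsum] at this
        have hcard : 0 < Fintype.card (Fin n) := Fintype.card_pos_iff.mpr ⟨a⟩
        have := this.symm
        rcases (by simpa [nsmul_eq_mul] using this : n = 0 ∨ v a = 0) with h0 | h0
        · simp [h0] at hcard
        · exact h0
      have := hvk (σ k)
      simp only [hv, Equiv.symm_apply_apply] at this
      omega
    obtain ⟨σ, hσ, hσi⟩ := htrans i j
    have := key σ hσ i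
    rw [hσi] at this
    omega
  · intro h u hu
    exact h u ⟨1, by rw [hu]; norm_num⟩

end
end
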